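/- Let τ ⊆ F^d be a finite set whose affine span has dimension q-1 with q+1 < d. Then the fraction of lines ℓ in F^d for which the affine span of ℓ ∪ τ has dimension exactly q+1 is greater than 1 - |F|^{-1}. -/

import Mathlib

/-!
Parametrise lines as `u + t • v` with `v ≠ 0`: every line has exactly `|F| (|F| - 1)`
parametrisations, so the fraction of good lines equals the fraction of good pairs `(u, v)`.
Fixing `p ∈ τ` and `W = vectorSpan τ` (of dimension `q - 1`), the direction of the affine span
of `ℓ ∪ τ` is `W ⊔ ⟨u - p⟩ ⊔ ⟨v⟩`, which has dimension `q + 1` iff `u - p ∉ W` and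
`v ∉ W ⊔ ⟨u - p⟩`. Hence the good pairs number `(|F|^d - |F|^(q-1)) (|F|^d - |F|^q)` out of
`|F|^d (|F|^d - 1)`, and since `|F|^q ≤ |F|^(d-2)` this ratio exceeds `1 - |F|⁻¹`.
-/

/-- A line in `F^d` is a 1-dimensional affine subspace. -/
def IsLine (F : Type*) [Field F] (d : ℕ) (ℓ : Set (Fin d → F)) : Prop :=
  ∃ u v : Fin d → F, v ≠ 0 ∧ ℓ = Set.range fun t : F => u + t • v

open Module Submodule

section FiberCounting

variable {α β : Type*}

theorem Nat.card_eq_card_mul_of_card_fiber [Finite α] [Finite β] (f : α → β) {m : ℕ}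
    (h : ∀ b, Nat.card {a // f a = b} = m) : Nat.card α = Nat.card β * m := by
  have := Fintype.ofFinite β
  rw [← Nat.card_congr (Equiv.sigmaFiberEquiv f), Nat.card_sigma,
    Finset.sum_congr rfl fun b _ => h b, Finset.sum_const, Finset.card_univ, smul_eq_mul,
    Nat.card_eq_fintype_card]

theorem Nat.card_subtype_comp_eq_mul [Finite α] [Finite β] (f : α → β) (P : β → Prop) {m : ℕ}
    (h : ∀ b, P b → Nat.card {a // f a = b} = m) :
    Nat.card {a // P (f a)} = Nat.card {b // P b} * m := by
  refine Nat.card_eq_card_mul_of_card_fiber (fun a => ⟨f a.1, a.2⟩) fun b => ?_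
  rw [← h b.1 b.2]
  exact Nat.card_congr
    { toFun := fun a => ⟨a.1.1, congrArg Subtype.val a.2⟩
      invFun := fun a => ⟨⟨a.1, a.2.symm ▸ b.2⟩, Subtype.ext a.2⟩
      left_inv := fun _ => rfl
      right_inv := fun _ => rfl }

theorem Nat.card_subtype_prod_eq_mul [Finite α] [Finite β] (A : α → Prop) (B : α → β → Prop)
    {k : ℕ} (h : ∀ a, A a → Nat.card {b // B a b} = k) :
    Nat.card {x : α × β // A x.1 ∧ B x.1 x.2} = Nat.card {a // A a} * k := by
  have := Fintype.ofFinite {a // A a}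
  let e : {x : α × β // A x.1 ∧ B x.1 x.2} ≃ Σ a : {a // A a}, {b // B a b} :=
    { toFun := fun x => ⟨⟨x.1.1, x.2.1⟩, ⟨x.1.2, x.2.2⟩⟩
      invFun := fun y => ⟨(y.1.1, y.2.1), y.1.2, y.2.2⟩
      left_inv := fun _ => rfl
      right_inv := fun _ => rfl }
  rw [Nat.card_congr e, Nat.card_sigma, Finset.sum_congr rfl fun a _ => h a.1 a.2,
    Finset.sum_const, Finset.card_univ, smul_eq_mul, Nat.card_eq_fintype_card]

end FiberCounting

section Lines

variable {K V : Type*} [Field K] [AddCommGroup V] [Module K V]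

variable (K) in
def lineOf (u v : V) : Set V := Set.range fun t : K => u + t • v

theorem lineOf_eq_lineOf_iff {u v u₀ v₀ : V} (hv : v ≠ 0) :
    lineOf K u v = lineOf K u₀ v₀ ↔ (∃ c : K, c ≠ 0 ∧ v = c • v₀) ∧ ∃ s : K, u = u₀ + s • v₀ := by
  constructor
  · intro h
    obtain ⟨s, hs⟩ : u ∈ lineOf K u₀ v₀ := h ▸ ⟨0, by simp⟩
    obtain ⟨s', hs'⟩ : u + v ∈ lineOf K u₀ v₀ := h ▸ ⟨1, by simp⟩
    have hv' : v = (s' - s) • v₀ := by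
      rw [sub_smul, ← add_sub_add_left_eq_sub _ _ u₀]
      simp only at hs hs'
      rw [hs, hs']
      abel
    exact ⟨⟨s' - s, fun h0 => hv (by rw [hv', h0, zero_smul]), hv'⟩, s, hs.symm⟩
  · rintro ⟨⟨c, hc, rfl⟩, s, rfl⟩
    ext x
    constructor
    · rintro ⟨t, rfl⟩
      exact ⟨s + t * c, by simp only; module⟩
    · rintro ⟨t, rfl⟩
      refine ⟨(t - s) / c, ?_⟩
      simp only [smul_smul, div_mul_cancel₀ _ hc]
      module

theorem image_sub_lineOf (u v p : V) : (· - p) '' lineOf K u v = lineOf K (u - p) v := by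
  rw [lineOf, ← Set.range_comp]
  exact congrArg Set.range (funext fun t => add_sub_right_comm u (t • v) p)

theorem span_lineOf (u v : V) : span K (lineOf K u v) = span K {u} ⊔ span K {v} := by
  apply le_antisymm
  · rw [span_le]
    rintro x ⟨t, rfl⟩
    exact add_mem (mem_sup_left (mem_span_singleton_self u))
      (mem_sup_right (smul_mem _ _ (mem_span_singleton_self v)))
  · have hu : u ∈ span K (lineOf K u v) := subset_span ⟨0, by simp⟩
    have huv : u + v ∈ span K (lineOf K u v) := subset_span ⟨1, by simp⟩
    rw [sup_le_iff, span_singleton_le_iff_mem, span_singleton_le_iff_mem]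
    exact ⟨hu, by simpa using sub_mem huv hu⟩

theorem direction_affineSpan_lineOf_union {τ : Set V} {p : V} (hp : p ∈ τ) (u v : V) :
    (affineSpan K (lineOf K u v ∪ τ)).direction =
      vectorSpan K τ ⊔ span K {u - p} ⊔ span K {v} := by
  rw [direction_affineSpan, vectorSpan_eq_span_vsub_set_right K (Set.mem_union_right _ hp),
    vectorSpan_eq_span_vsub_set_right K hp, Set.image_union, span_union]
  simp only [vsub_eq_sub]
  rw [image_sub_lineOf, span_lineOf, sup_comm, sup_assoc]

theorem card_params_of_lineOf_eq [Finite K] {u₀ v₀ : V} (hv₀ : v₀ ≠ 0) :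
    Nat.card {x : {x : V × V // x.2 ≠ 0} // lineOf K x.1.1 x.1.2 = lineOf K u₀ v₀} =
      Nat.card K * (Nat.card K - 1) := by
  let e : K × {c : K // c ≠ 0} ≃
      {x : {x : V × V // x.2 ≠ 0} // lineOf K x.1.1 x.1.2 = lineOf K u₀ v₀} := by
    refine .ofBijective (fun sc => ⟨⟨(u₀ + sc.1 • v₀, sc.2.1 • v₀), smul_ne_zero sc.2.2 hv₀⟩,
      (lineOf_eq_lineOf_iff (smul_ne_zero sc.2.2 hv₀)).2 ⟨⟨sc.2.1, sc.2.2, rfl⟩, sc.1, rfl⟩⟩)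
      ⟨?_, ?_⟩
    · rintro ⟨s, c, hc⟩ ⟨s', c', hc'⟩ h
      simp only [Subtype.mk.injEq, Prod.mk.injEq, add_right_inj] at h
      obtain ⟨hs, hc⟩ := h
      obtain rfl := smul_left_injective K hv₀ hs
      obtain rfl := smul_left_injective K hv₀ hc
      rfl
    · rintro ⟨⟨⟨u, v⟩, hv⟩, hl⟩
      obtain ⟨⟨c, hc, rfl⟩, s, rfl⟩ := (lineOf_eq_lineOf_iff hv).1 hl
      exact ⟨⟨s, c, hc⟩, rfl⟩
  rw [← Nat.card_congr e, Nat.card_prod, ← Nat.card_units, Nat.card_congr unitsEquivNeZero]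

end Lines

section Rank

variable {K V : Type*} [Field K] [AddCommGroup V] [Module K V] [FiniteDimensional K V]

theorem finrank_sup_span_singleton_le (U : Submodule K V) (v : V) :
    finrank K ↥(U ⊔ span K {v}) ≤ finrank K U + 1 := by
  by_cases hv : v ∈ U
  · rw [sup_eq_left.2 ((span_singleton_le_iff_mem v U).2 hv)]
    omega
  · rw [finrank_sup_span_singleton hv]

theorem finrank_sup_span_sup_span_eq_add_two_iff (W : Submodule K V) (a b : V) :
    finrank K ↥(W ⊔ span K {a} ⊔ span K {b}) = finrank K W + 2 ↔
      a ∉ W ∧ b ∉ W ⊔ span K {a} := by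
  constructor
  · intro h
    have ha : a ∉ W := fun ha => by
      rw [sup_eq_left.2 ((span_singleton_le_iff_mem a W).2 ha)] at h
      have := finrank_sup_span_singleton_le W b
      omega
    refine ⟨ha, fun hb => ?_⟩
    rw [sup_eq_left.2 ((span_singleton_le_iff_mem b _).2 hb), finrank_sup_span_singleton ha] at h
    omega
  · rintro ⟨ha, hb⟩
    rw [finrank_sup_span_singleton hb, finrank_sup_span_singleton ha]

end Rank

section Counting

variable {K V : Type*} [Field K] [AddCommGroup V] [Module K V] [Finite V]

theorem card_notMem_submodule (U : Submodule K V) :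
    Nat.card {v // v ∉ U} = Nat.card K ^ finrank K V - Nat.card K ^ finrank K U := by
  classical
  have hsum := Nat.card_congr (Equiv.sumCompl (· ∈ U))
  rw [Nat.card_sum] at hsum
  rw [← Module.natCard_eq_pow_finrank, ← Module.natCard_eq_pow_finrank (V := U), ← hsum]
  exact (Nat.add_sub_cancel_left ..).symm

theorem card_pairs_notMem_sup_span (W : Submodule K V) (p : V) :
    Nat.card {x : V × V // x.1 - p ∉ W ∧ x.2 ∉ W ⊔ span K {x.1 - p}} =
      (Nat.card K ^ finrank K V - Nat.card K ^ finrank K W) *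
        (Nat.card K ^ finrank K V - Nat.card K ^ (finrank K W + 1)) := by
  rw [Nat.card_subtype_prod_eq_mul (fun u => u - p ∉ W) (fun u v => v ∉ W ⊔ span K {u - p})
      fun u hu => by
      rw [card_notMem_submodule, finrank_sup_span_singleton hu],
    ← card_notMem_submodule W]
  exact congrArg (· * _) (Nat.card_congr ((Equiv.subRight p).subtypeEquiv fun _ => Iff.rfl))

end Counting

section Arithmetic

theorem one_sub_inv_mul_lt {c X Y Z : ℝ} (hc : 2 ≤ c) (hX : 0 < X) (hY : 0 ≤ Y) (hZY : Z ≤ Y)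
    (hYX : c ^ 2 * Y ≤ X) : (1 - c⁻¹) * (X * (X - 1)) < (X - Z) * (X - Y) := by
  have hc0 : 0 < c := by linarith
  rw [← mul_lt_mul_iff_of_pos_left hc0, ← mul_assoc, mul_sub, mul_one, mul_inv_cancel₀ hc0.ne']
  -- `X ≥ c²Y ≥ 2cY` makes `c (X - Y)² - (c - 1) X (X - 1) = X (X - 2cY) + cY² + (c - 1) X` positive
  have h2cY : 2 * c * Y ≤ X :=
    (mul_le_mul_of_nonneg_right (by nlinarith : 2 * c ≤ c ^ 2) hY).trans hYX
  have hXY : 0 ≤ X - Y := by nlinarith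
  have hZ : c * (X - Y) * (X - Y) ≤ c * (X - Y) * (X - Z) :=
    mul_le_mul_of_nonneg_left (by linarith) (by positivity)
  nlinarith [mul_nonneg hX.le (sub_nonneg.2 h2cY), mul_pos (by linarith : 0 < c - 1) hX,
    mul_nonneg hc0.le (sq_nonneg Y)]

theorem one_sub_inv_mul_lt_of_card_eq {c d w L G : ℕ} (hc : 2 ≤ c) (hd : w + 3 ≤ d)
    (hL : L * (c * (c - 1)) = c ^ d * (c ^ d - 1))
    (hG : G * (c * (c - 1)) = (c ^ d - c ^ w) * (c ^ d - c ^ (w + 1))) :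
    (1 - (c : ℝ)⁻¹) * L < G := by
  have hm : (0 : ℝ) < (c * (c - 1) : ℕ) := by
    have : 0 < c - 1 := by omega
    positivity
  have hc1 : 1 ≤ c := by omega
  rw [← mul_lt_mul_iff_of_pos_right hm, mul_assoc, ← Nat.cast_mul, ← Nat.cast_mul, hL, hG]
  push_cast [Nat.cast_sub (Nat.one_le_pow _ _ hc1),
    Nat.cast_sub (Nat.pow_le_pow_right hc1 (by omega : w ≤ d)),
    Nat.cast_sub (Nat.pow_le_pow_right hc1 (by omega : w + 1 ≤ d))]
  refine one_sub_inv_mul_lt (by exact_mod_cast hc) (by positivity) (by positivity)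
    (pow_le_pow_right₀ (by exact_mod_cast hc1) w.le_succ) ?_
  rw [← pow_add]
  exact pow_le_pow_right₀ (by exact_mod_cast hc1) (by omega)

end Arithmetic

section LinesInFinFun

variable {F : Type*} [Field F] {d : ℕ}

def lineOfParams (x : {x : (Fin d → F) × (Fin d → F) // x.2 ≠ 0}) : {ℓ // IsLine F d ℓ} :=
  ⟨lineOf F x.1.1 x.1.2, x.1.1, x.1.2, x.2, rfl⟩

variable [Finite F]

theorem card_fiber_lineOfParams (ℓ : {ℓ // IsLine F d ℓ}) :
    Nat.card {x // lineOfParams x = ℓ} = Nat.card F * (Nat.card F - 1) := by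
  obtain ⟨_, u₀, v₀, hv₀, rfl⟩ := ℓ
  rw [← card_params_of_lineOf_eq hv₀]
  exact Nat.card_congr (Equiv.subtypeEquivRight fun _ => Subtype.ext_iff)

theorem card_lines_mul :
    Nat.card {ℓ // IsLine F d ℓ} * (Nat.card F * (Nat.card F - 1)) =
      Nat.card F ^ d * (Nat.card F ^ d - 1) := by
  have hnonzero := card_notMem_submodule (⊥ : Submodule F (Fin d → F))
  rw [finrank_fin_fun, finrank_bot, pow_zero] at hnonzero
  rw [← Nat.card_eq_card_mul_of_card_fiber lineOfParams card_fiber_lineOfParams]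
  calc Nat.card {x : (Fin d → F) × (Fin d → F) // x.2 ≠ 0}
      = Nat.card {x : (Fin d → F) × (Fin d → F) // True ∧ x.2 ∉ (⊥ : Submodule F _)} :=
        Nat.card_congr (Equiv.subtypeEquivRight fun _ => by simp)
    _ = Nat.card {u : Fin d → F // True} * (Nat.card F ^ d - 1) :=
        Nat.card_subtype_prod_eq_mul (fun _ => True) _ fun _ _ => hnonzero
    _ = Nat.card F ^ d * (Nat.card F ^ d - 1) := by
        rw [Nat.card_congr (Equiv.subtypeUnivEquiv fun _ => trivial),
          natCard_eq_pow_finrank (K := F), finrank_fin_fun]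

theorem card_lines_spanning_mul {τ : Set (Fin d → F)} {p : Fin d → F} (hp : p ∈ τ) :
    Nat.card {ℓ // IsLine F d ℓ ∧
        finrank F (affineSpan F (ℓ ∪ τ)).direction = finrank F (vectorSpan F τ) + 2} *
        (Nat.card F * (Nat.card F - 1)) =
      (Nat.card F ^ d - Nat.card F ^ finrank F (vectorSpan F τ)) *
        (Nat.card F ^ d - Nat.card F ^ (finrank F (vectorSpan F τ) + 1)) := by
  have hpairs := card_pairs_notMem_sup_span (vectorSpan F τ) p
  rw [finrank_fin_fun] at hpairs
  rw [← Nat.card_congr (Equiv.subtypeSubtypeEquivSubtypeInter (IsLine F d) _),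
    ← Nat.card_subtype_comp_eq_mul lineOfParams _ fun ℓ _ => card_fiber_lineOfParams ℓ, ← hpairs]
  refine Nat.card_congr ((Equiv.subtypeEquivRight fun x => ?_).trans
    (Equiv.subtypeSubtypeEquivSubtype fun hx h0 => hx.2 (h0 ▸ zero_mem _)))
  rw [lineOfParams, direction_affineSpan_lineOf_union hp, finrank_sup_span_sup_span_eq_add_two_iff]

end LinesInFinFun

theorem most_lines_span_full_dimension_general (F : Type*) [Field F] [Fintype F]
    (d q : ℕ) (hq : 1 ≤ q) (hd : q + 1 < d)
    (τ : Set (Fin d → F)) (hτne : τ.Nonempty)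
    (hτdim : Module.finrank F (affineSpan F τ).direction = q - 1) :
    (1 - (Fintype.card F : ℝ)⁻¹) *
        (Nat.card {ℓ : Set (Fin d → F) // IsLine F d ℓ} : ℝ) <
      (Nat.card {ℓ : Set (Fin d → F) // IsLine F d ℓ ∧
        Module.finrank F (affineSpan F (ℓ ∪ τ)).direction = q + 1} : ℝ) := by
  obtain ⟨p, hp⟩ := hτne
  rw [direction_affineSpan] at hτdim
  rw [← Nat.card_eq_fintype_card, show q + 1 = finrank F (vectorSpan F τ) + 2 by omega]
  exact one_sub_inv_mul_lt_of_card_eq Finite.one_lt_card (by omega) card_lines_mul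
    (card_lines_spanning_mul hp)

/-- If `τ ⊆ F^d` is a finite set whose affine span has dimension `q - 1` and
`q + 1 < d`, then the fraction of lines `ℓ` of `F^d` for which the affine span
of `ℓ ∪ τ` has dimension exactly `q + 1` is greater than `1 - |F|⁻¹`. -/
theorem most_lines_span_full_dimension (F : Type*) [Field F] [Fintype F]
    (d q : ℕ) (hq : 1 ≤ q) (hd : q + 1 < d)
    (τ : Set (Fin d → F)) (hτfin : τ.Finite) (hτne : τ.Nonempty)
    (hτdim : Module.finrank F (affineSpan F τ).direction = q - 1) :
    (1 - (Fintype.card F : ℝ)⁻¹) *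
        (Nat.card {ℓ : Set (Fin d → F) // IsLine F d ℓ} : ℝ) <
      (Nat.card {ℓ : Set (Fin d → F) // IsLine F d ℓ ∧
        Module.finrank F (affineSpan F (ℓ ∪ τ)).direction = q + 1} : ℝ) :=
  most_lines_span_full_dimension_general F d q hq hd τ hτne hτdim
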